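/- (Relaxed weak growth condition implies linear SGD convergence to a noise ball.) Let g(·,z) be a family of differentiable functions with G(w) := E_z[g(w,z)] μ_g-strongly convex with minimizer w*, and suppose E_z[‖∇g(w,z)‖²] ≤ 2ρ(G(w) − G*) + σ² for all w, where G* = G(w*). For SGD iterates w_{t+1} = w_t − (η̄/ρ)∇g(w_t, z_t) with z_t ~ P_z i.i.d. and η̄ ∈ (0, min{1, ρ/μ_g}], it holds that E[‖w_t − w*‖²] ≤ (1 − η̄μ_g/ρ)^t ‖w_0 − w*‖² + η̄σ²/(ρμ_g). -/

import Mathlib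

/-!
Write `c = η̄/ρ`. Expanding the square,
`E‖w - c∇g(w,z) - w*‖² = ‖w - w*‖² - 2c⟪w - w*, ∇G(w)⟫ + c² E‖∇g(w,z)‖²`.
Strong convexity bounds the cross term below by `G(w) - G* + (μ_g/2)‖w - w*‖²` and the relaxed
weak growth condition bounds the last term by `2ρ(G(w) - G*) + σ²`; as `cρ = η̄ ≤ 1`, the
`G(w) - G*` terms add up to `-2c(1 - cρ)(G(w) - G*) ≤ 0`. This gives the drift inequality
`E‖w_{t+1} - w*‖² ≤ (1 - cμ_g) E‖w_t - w*‖² + c²σ²`, which unrolls to the claim.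

To average over `z_t` first (Fubini), `w_t` must be a.e. equal to a `σ(z_0, …, z_{t-1})`-measurable
map, which is independent of `z_t`. This needs `g` to be jointly measurable up to null sets: it is
continuous in `w`, and a.e.-measurable in `z` because otherwise `G(w) = E g(w,z)` would be the junk
value `0` on a dense set of `w`, which a strongly convex function cannot be.
-/

open MeasureTheory ProbabilityTheory Filter Function
open scoped RealInnerProductSpace Topology

section RandomRecursion

variable {Ω X Z : Type*} [MeasurableSpace Ω] [MeasurableSpace X] [mZ : MeasurableSpace Z]
  {P : Measure Ω} {z : ℕ → Ω → Z}

theorem map_prodMk_eq_prod_of_measurable_iSup_lt [IsFiniteMeasure P] {Pz : Measure Z}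
    (hz : ∀ i, Measurable (z i)) (hindep : iIndepFun z P) {n : ℕ} (hdist : P.map (z n) = Pz)
    {y : Ω → X} (hy : Measurable[⨆ i < n, mZ.comap (z i)] y) :
    P.map (fun ω => (y ω, z n ω)) = (P.map y).prod Pz := by
  have hindep_past := indep_iSup_of_disjoint (fun i => (hz i).comap_le)
    ((iIndepFun_iff_iIndep _ _ _).1 hindep) (S := Set.Iio n) (T := {n}) (by simp)
  simp only [Set.mem_singleton_iff, iSup_iSup_eq_left] at hindep_past
  have hyz : IndepFun y (z n) P := indep_of_indep_of_le_left hindep_past hy.comap_le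
  rw [← hdist]
  exact hyz.map_prod_eq_prod_map_map
    (hy.mono (iSup₂_le fun i _ => (hz i).comap_le) le_rfl).aemeasurable (hz n).aemeasurable

variable [IsProbabilityMeasure P] {Pz : Measure Z} {Φ : X → Z → X} {x₀ : X} {x : ℕ → Ω → X}

theorem exists_measurable_iSup_lt_ae_eq
    (hΦ : ∀ (μ : Measure X) [IsProbabilityMeasure μ], AEMeasurable (uncurry Φ) (μ.prod Pz))
    (hz : ∀ i, Measurable (z i)) (hindep : iIndepFun z P) (hdist : ∀ i, P.map (z i) = Pz)
    (hx₀ : ∀ ω, x 0 ω = x₀) (hx : ∀ n ω, x (n + 1) ω = Φ (x n ω) (z n ω)) (n : ℕ) :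
    ∃ y : Ω → X, Measurable[⨆ i < n, mZ.comap (z i)] y ∧ x n =ᵐ[P] y := by
  induction n with
  | zero => exact ⟨fun _ => x₀, measurable_const, .of_forall hx₀⟩
  | succ n ih =>
    obtain ⟨y, hym, hxy⟩ := ih
    have hy : Measurable y := hym.mono (iSup₂_le fun i _ => (hz i).comap_le) le_rfl
    have := Measure.isProbabilityMeasure_map (μ := P) hy.aemeasurable
    have hpair := map_prodMk_eq_prod_of_measurable_iSup_lt hz hindep (hdist n) hym
    have hpast : (⨆ i < n, mZ.comap (z i)) ≤ ⨆ i < n + 1, mZ.comap (z i) :=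
      iSup₂_mono' fun i hi => ⟨i, hi.trans (Nat.lt_succ_self n), le_rfl⟩
    have hnow : mZ.comap (z n) ≤ ⨆ i < n + 1, mZ.comap (z i) :=
      le_iSup₂ (f := fun i (_ : i < n + 1) => mZ.comap (z i)) n (Nat.lt_succ_self n)
    refine ⟨fun ω => (hΦ (P.map y)).mk _ (y ω, z n ω), ?_, ?_⟩
    · exact (hΦ _).measurable_mk.comp
        ((hym.mono hpast le_rfl).prodMk ((comap_measurable (z n)).mono hnow le_rfl))
    · have hΦy := ae_of_ae_map (hy.prodMk (hz n)).aemeasurable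
        (by rw [hpair]; exact (hΦ (P.map y)).ae_eq_mk)
      filter_upwards [hxy, hΦy] with ω h₁ h₂
      rw [hx, h₁]
      exact h₂

theorem integral_comp_succ_le_of_drift [IsProbabilityMeasure Pz]
    (hΦ : ∀ (μ : Measure X) [IsProbabilityMeasure μ], AEMeasurable (uncurry Φ) (μ.prod Pz))
    (hz : ∀ i, Measurable (z i)) (hindep : iIndepFun z P) (hdist : ∀ i, P.map (z i) = Pz)
    (hx₀ : ∀ ω, x 0 ω = x₀) (hx : ∀ n ω, x (n + 1) ω = Φ (x n ω) (z n ω))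
    {V : X → ℝ} (hV : Measurable V) {a b : ℝ} (hdrift : ∀ x, ∫ ζ, V (Φ x ζ) ∂Pz ≤ a * V x + b)
    (hint : ∀ n, Integrable (fun ω => V (x n ω)) P) (n : ℕ) :
    ∫ ω, V (x (n + 1) ω) ∂P ≤ a * ∫ ω, V (x n ω) ∂P + b := by
  obtain ⟨y, hym, hxy⟩ := exists_measurable_iSup_lt_ae_eq hΦ hz hindep hdist hx₀ hx n
  have hy : Measurable y := hym.mono (iSup₂_le fun i _ => (hz i).comap_le) le_rfl
  have := Measure.isProbabilityMeasure_map (μ := P) hy.aemeasurable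
  have hVxy : (fun ω => V (x n ω)) =ᵐ[P] fun ω => V (y ω) := hxy.fun_comp V
  have hpair := map_prodMk_eq_prod_of_measurable_iSup_lt hz hindep (hdist n) hym
  have hpair_meas : AEMeasurable (fun ω => (y ω, z n ω)) P := (hy.prodMk (hz n)).aemeasurable
  have hVΦ : AEStronglyMeasurable (fun p => V (uncurry Φ p)) (P.map fun ω => (y ω, z n ω)) := by
    rw [hpair]
    exact (hV.comp_aemeasurable (hΦ _)).aestronglyMeasurable
  have hsucc : (fun ω => V (x (n + 1) ω)) =ᵐ[P] fun ω => V (uncurry Φ (y ω, z n ω)) := by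
    filter_upwards [hxy] with ω h
    rw [hx, h, uncurry_apply_pair]
  have hVΦ_int : Integrable (fun p => V (uncurry Φ p)) ((P.map y).prod Pz) := by
    rw [← hpair, integrable_map_measure hVΦ hpair_meas]
    exact (hint (n + 1)).congr hsucc
  have hV_int : Integrable V (P.map y) := by
    rw [integrable_map_measure hV.aestronglyMeasurable hy.aemeasurable]
    exact (hint n).congr hVxy
  calc ∫ ω, V (x (n + 1) ω) ∂P
      = ∫ p, V (uncurry Φ p) ∂((P.map y).prod Pz) := by
        rw [integral_congr_ae hsucc, ← hpair, integral_map hpair_meas hVΦ]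
    _ = ∫ v, ∫ ζ, V (Φ v ζ) ∂Pz ∂(P.map y) := integral_prod _ hVΦ_int
    _ ≤ ∫ v, (a * V v + b) ∂(P.map y) :=
        integral_mono hVΦ_int.integral_prod_left ((hV_int.const_mul a).add (integrable_const b))
          hdrift
    _ = a * ∫ ω, V (x n ω) ∂P + b := by
        rw [integral_add (hV_int.const_mul a) (integrable_const b), integral_const_mul,
          integral_map hy.aemeasurable hV.aestronglyMeasurable,
          integral_congr_ae hVxy]
        simp

end RandomRecursion

theorem le_pow_mul_add_of_le_mul_add {e : ℕ → ℝ} {a b B : ℝ} (ha : 0 ≤ a) (hB : 0 ≤ B)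
    (hb : b ≤ (1 - a) * B) (he : ∀ n, e (n + 1) ≤ a * e n + b) (n : ℕ) :
    e n ≤ a ^ n * e 0 + B := by
  induction n with
  | zero => simpa using hB
  | succ n ih =>
    calc e (n + 1) ≤ a * (a ^ n * e 0 + B) + b := by nlinarith [he n]
      _ ≤ a ^ (n + 1) * e 0 + B := by rw [pow_succ]; nlinarith

section Caratheodory

variable {X Z : Type*} [TopologicalSpace X] [TopologicalSpace.MetrizableSpace X]
  [SecondCountableTopology X] [MeasurableSpace X] [OpensMeasurableSpace X] [MeasurableSpace Z]
  {Pz : Measure Z}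

theorem aemeasurable_uncurry_of_continuous_of_aestronglyMeasurable [Nonempty X] {h : X → Z → ℝ}
    (hcont : ∀ ζ, Continuous fun x => h x ζ) (hmeas : ∀ x, AEStronglyMeasurable (h x) Pz)
    (μ : Measure X) : AEMeasurable (uncurry h) (μ.prod Pz) := by
  set u := TopologicalSpace.denseSeq X
  set N := toMeasurable Pz {ζ | ¬ ∀ m, h (u m) ζ = (hmeas (u m)).mk _ ζ}
  have hN : Pz N = 0 := by
    rw [measure_toMeasurable, ← ae_iff]
    exact ae_all_iff.2 fun m => (hmeas (u m)).ae_eq_mk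
  set h' : X → Z → ℝ := fun x => Nᶜ.indicator (h x)
  have hcont' : ∀ ζ, Continuous fun x => h' x ζ := by
    intro ζ
    by_cases hζ : ζ ∈ N <;> simp [h', hζ, hcont ζ, continuous_const]
  have hmeas_dense : ∀ m, Measurable (h' (u m)) := by
    intro m
    have : h' (u m) = Nᶜ.indicator ((hmeas (u m)).mk _) := by
      refine Set.indicator_congr fun ζ hζ => ?_
      exact not_not.1 (fun h => hζ (subset_toMeasurable _ _ h)) m
    rw [this]
    exact (hmeas (u m)).stronglyMeasurable_mk.measurable.indicator
      (measurableSet_toMeasurable _ _).compl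
  have hmeas' : ∀ x, Measurable (h' x) := by
    intro x
    have : (comap u (𝓝 x)).NeBot := comap_neBot_iff.2 fun t ht => by
      obtain ⟨_, hy, m, rfl⟩ :=
        mem_closure_iff_nhds.1 (TopologicalSpace.denseRange_denseSeq X x) t ht
      exact ⟨m, hy⟩
    exact measurable_of_tendsto_metrizable' (comap u (𝓝 x)) hmeas_dense
      (tendsto_pi_nhds.2 fun ζ => ((hcont' ζ).tendsto x).comp tendsto_comap)
  refine ⟨uncurry h', measurable_uncurry_of_continuous_of_measurable hcont' hmeas', ?_⟩
  filter_upwards [Measure.quasiMeasurePreserving_snd.ae (measure_eq_zero_iff_ae_notMem.1 hN)]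
    with p hp
  exact (Set.indicator_of_mem (Set.mem_compl hp) _).symm

end Caratheodory

section InnerProductSpace

variable {E : Type*} [NormedAddCommGroup E] [InnerProductSpace ℝ E] [CompleteSpace E]
  {Z : Type*} [MeasurableSpace Z] {Pz : Measure Z}

theorem tendsto_sum_slope_smul_gradient {ι α : Type*} [Fintype ι] (b : OrthonormalBasis ι ℝ E)
    {f : E → ℝ} {x : E} (hf : DifferentiableAt ℝ f x) {l : Filter α} {s : α → ℝ}
    (hs : Tendsto s l (𝓝[≠] 0)) :
    Tendsto (fun k => ∑ i, slope (fun t => f (x + t • b i)) 0 (s k) • b i) l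
      (𝓝 (gradient f x)) := by
  conv_rhs => rw [← b.sum_repr' (gradient f x)]
  refine tendsto_finsetSum _ fun i _ => Tendsto.smul_const ?_ _
  have hline : HasDerivAt (fun t : ℝ => x + t • b i) (b i) 0 := by
    simpa using ((hasDerivAt_id (0 : ℝ)).smul_const (b i)).const_add x
  have hf' : HasFDerivAt f (InnerProductSpace.toDual ℝ E (gradient f x)) (x + (0 : ℝ) • b i) := by
    simpa using hf.hasGradientAt.hasFDerivAt
  have hderiv := hf'.comp_hasDerivAt (0 : ℝ) hline
  rw [InnerProductSpace.toDual_apply_apply, real_inner_comm] at hderiv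
  exact (hasDerivAt_iff_tendsto_slope.1 hderiv).comp hs

section Measurability

variable [FiniteDimensional ℝ E] [MeasurableSpace E] [BorelSpace E]

theorem aemeasurable_uncurry_gradient {g : E → Z → ℝ} (hdiff : ∀ ζ, Differentiable ℝ (g · ζ))
    (hmeas : ∀ x, AEStronglyMeasurable (g x) Pz) (μ : Measure E) :
    AEMeasurable (fun p : E × Z => gradient (g · p.2) p.1) (μ.prod Pz) := by
  set b := stdOrthonormalBasis ℝ E
  have hshift : ∀ v : E, AEMeasurable (fun p : E × Z => g (p.1 + v) p.2) (μ.prod Pz) :=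
    fun v => aemeasurable_uncurry_of_continuous_of_aestronglyMeasurable
      (h := fun x ζ => g (x + v) ζ)
      (fun ζ => (hdiff ζ).continuous.comp (continuous_add_const v)) (fun x => hmeas (x + v)) μ
  have hs : Tendsto (fun k : ℕ => ((k : ℝ) + 1)⁻¹) atTop (𝓝[≠] 0) := by
    refine tendsto_nhdsWithin_of_tendsto_nhds_of_eventually_within _ ?_ (.of_forall fun k => ?_)
    · simpa using tendsto_one_div_add_atTop_nhds_zero_nat (𝕜 := ℝ)
    · simp only [Set.mem_compl_iff, Set.mem_singleton_iff]
      positivity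
  refine aemeasurable_of_tendsto_metrizable_ae atTop (fun k => ?_)
    (.of_forall fun p => tendsto_sum_slope_smul_gradient b (hdiff p.2 p.1) hs)
  refine Finset.aemeasurable_fun_sum _ fun i _ => ?_
  simp only [slope_def_module, sub_zero, smul_eq_mul]
  exact (((hshift _).sub (hshift _)).const_mul _).smul_const _

end Measurability

section StronglyConvex

variable {G : E → ℝ} {μ : ℝ}

theorem dense_setOf_ne_of_strongly_convex [Nontrivial E] (hμ : 0 < μ)
    (hsc : ∀ w v, G v ≥ G w + ⟪gradient G w, v - w⟫ + μ / 2 * ‖v - w‖ ^ 2) (c : ℝ) :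
    Dense {w | G w ≠ c} := by
  show Dense {w | G w = c}ᶜ
  rw [← interior_eq_empty_iff_dense_compl, Set.eq_empty_iff_forall_notMem]
  intro w hw
  obtain ⟨ε, hε, hball⟩ := Metric.mem_nhds_iff.1 (mem_interior_iff_mem_nhds.1 hw)
  obtain ⟨u, hu⟩ := exists_norm_eq E (half_pos hε).le
  have hmem : ∀ v, ‖v‖ ≤ ε / 2 → G (w + v) = c := fun v hv =>
    hball (by simpa using hv.trans_lt (half_lt_self hε))
  have h₁ := hsc w (w + u)
  have h₂ := hsc w (w + -u)
  simp only [add_sub_cancel_left, inner_neg_right, norm_neg, hu] at h₁ h₂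
  rw [hmem u hu.le, hball (Metric.mem_ball_self hε)] at h₁
  rw [hmem (-u) (by rw [norm_neg, hu]), hball (Metric.mem_ball_self hε)] at h₂
  nlinarith [mul_pos hμ (pow_pos (half_pos hε) 2)]

theorem aestronglyMeasurable_of_integral_strongly_convex [Nontrivial E] {g : E → Z → ℝ}
    (hG : ∀ w, G w = ∫ ζ, g w ζ ∂Pz) (hcont : ∀ ζ, Continuous (g · ζ)) (hμ : 0 < μ)
    (hsc : ∀ w v, G v ≥ G w + ⟪gradient G w, v - w⟫ + μ / 2 * ‖v - w‖ ^ 2) (w : E) :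
    AEStronglyMeasurable (g w) Pz := by
  obtain ⟨u, hu, hlim⟩ :=
    mem_closure_iff_seq_limit.1 (dense_setOf_ne_of_strongly_convex hμ hsc 0 w)
  refine aestronglyMeasurable_of_tendsto_ae atTop (f := fun n => g (u n)) (fun n => ?_)
    (.of_forall fun ζ => ((hcont ζ).tendsto w).comp hlim)
  by_contra h
  exact hu n (by rw [hG, integral_undef fun hi => h hi.1])

end StronglyConvex

theorem integral_norm_sub_sq [IsProbabilityMeasure Pz] (a : E) {W : Z → E}
    (hW : Integrable W Pz) (hsq : Integrable (fun ζ => ‖a - W ζ‖ ^ 2) Pz) :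
    ∫ ζ, ‖a - W ζ‖ ^ 2 ∂Pz = ‖a‖ ^ 2 - 2 * ⟪a, ∫ ζ, W ζ ∂Pz⟫ + ∫ ζ, ‖W ζ‖ ^ 2 ∂Pz := by
  have hW2 : Integrable (fun ζ => ‖W ζ‖ ^ 2) Pz := by
    have hL2 : MemLp (fun ζ => a - W ζ) 2 Pz :=
      (memLp_two_iff_integrable_sq_norm (aestronglyMeasurable_const.sub hW.1)).2 hsq
    refine (memLp_two_iff_integrable_sq_norm hW.1).1 ?_
    convert (memLp_const a).sub hL2 using 1
    ext ζ
    simp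
  have hinner : Integrable (fun ζ => 2 * ⟪a, W ζ⟫) Pz := (hW.const_inner a).const_mul 2
  have hfirst : Integrable (fun ζ => ‖a‖ ^ 2 - 2 * ⟪a, W ζ⟫) Pz := (integrable_const _).sub hinner
  simp_rw [norm_sub_sq_real]
  rw [integral_add hfirst hW2, integral_sub (integrable_const _) hinner,
    integral_const_mul, integral_inner hW]
  simp

noncomputable def sgdStep (g : E → Z → ℝ) (c : ℝ) (x : E) (ζ : Z) : E :=
  x - c • gradient (fun v => g v ζ) x

theorem aemeasurable_uncurry_sgdStep [FiniteDimensional ℝ E] [MeasurableSpace E] [BorelSpace E]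
    {g : E → Z → ℝ} (hdiff : ∀ ζ, Differentiable ℝ (g · ζ))
    (hmeas : ∀ x, AEStronglyMeasurable (g x) Pz) (c : ℝ) (μ : Measure E) :
    AEMeasurable (uncurry (sgdStep g c)) (μ.prod Pz) :=
  measurable_fst.aemeasurable.sub ((aemeasurable_uncurry_gradient hdiff hmeas μ).const_smul c)

theorem integral_norm_sgdStep_sub_sq_le [IsProbabilityMeasure Pz] {g : E → Z → ℝ} {G : E → ℝ}
    {μ ρ σ c : ℝ} (hunbiased : ∀ w, ∫ ζ, gradient (fun v => g v ζ) w ∂Pz = gradient G w)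
    (hμ : 0 < μ) (hsc : ∀ w v, G v ≥ G w + ⟪gradient G w, v - w⟫ + μ / 2 * ‖v - w‖ ^ 2)
    {wstar : E} (hmin : ∀ w, G wstar ≤ G w)
    (hrwgc : ∀ w, ∫ ζ, ‖gradient (fun v => g v ζ) w‖ ^ 2 ∂Pz ≤ 2 * ρ * (G w - G wstar) + σ ^ 2)
    (hc : 0 ≤ c) (hcρ : c * ρ ≤ 1) (hcμ : c * μ ≤ 1) (x : E) :
    ∫ ζ, ‖sgdStep g c x ζ - wstar‖ ^ 2 ∂Pz ≤ (1 - c * μ) * ‖x - wstar‖ ^ 2 + c ^ 2 * σ ^ 2 := by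
  have hgap : G x - G wstar + μ / 2 * ‖x - wstar‖ ^ 2 ≤ ⟪x - wstar, gradient G x⟫ := by
    have h := hsc x wstar
    rw [← neg_sub x wstar, inner_neg_right, norm_neg, real_inner_comm] at h
    linarith
  have hgap₀ := sub_nonneg.2 (hmin x)
  have hnorm_smul : ∀ ζ, ‖c • gradient (fun v => g v ζ) x‖ ^ 2
      = c ^ 2 * ‖gradient (fun v => g v ζ) x‖ ^ 2 := fun ζ => by
    rw [norm_smul, mul_pow, Real.norm_eq_abs, sq_abs]
  by_cases hv : Integrable (fun ζ => gradient (fun v => g v ζ) x) Pz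
  · by_cases hI : Integrable (fun ζ => ‖sgdStep g c x ζ - wstar‖ ^ 2) Pz
    · have hstep : ∀ ζ, sgdStep g c x ζ - wstar = (x - wstar) - c • gradient (fun v => g v ζ) x :=
        fun ζ => sub_right_comm _ _ _
      simp_rw [hstep] at hI ⊢
      rw [integral_norm_sub_sq _ (hv.smul c : Integrable (fun ζ => c • _) Pz) hI, integral_smul,
        hunbiased, inner_smul_right]
      simp_rw [hnorm_smul]
      rw [integral_const_mul]
      nlinarith [mul_le_mul_of_nonneg_left hgap (by positivity : (0 : ℝ) ≤ 2 * c),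
        mul_le_mul_of_nonneg_left (hrwgc x) (sq_nonneg c),
        mul_nonneg (mul_nonneg hc (sub_nonneg.2 hcρ)) hgap₀]
    · rw [integral_undef hI]
      exact add_nonneg (mul_nonneg (sub_nonneg.2 hcμ) (sq_nonneg _)) (by positivity)
  · -- the junk value `∫ = 0` makes `x` a critical point of `G`, hence the minimizer
    have hcrit : gradient G x = 0 := by rw [← hunbiased x, integral_undef hv]
    rw [hcrit, inner_zero_right] at hgap
    have hsq : ‖x - wstar‖ ^ 2 ≤ 0 := le_of_mul_le_mul_left (by linarith) (half_pos hμ)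
    have hx : x = wstar :=
      sub_eq_zero.1 (norm_eq_zero.1 (pow_eq_zero_iff two_ne_zero |>.1 (hsq.antisymm (sq_nonneg _))))
    subst hx
    simp only [sgdStep, sub_sub_cancel_left, norm_neg, hnorm_smul, sub_self, norm_zero]
    rw [integral_const_mul]
    have := hrwgc x
    simp only [sub_self, mul_zero, zero_add] at this
    nlinarith [mul_le_mul_of_nonneg_left this (sq_nonneg c)]

end InnerProductSpace

theorem stmt_8_general {d : ℕ} {Ω Z : Type*} [MeasurableSpace Ω] [MeasurableSpace Z]
    (Pr : Measure Ω) [IsProbabilityMeasure Pr]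
    (Pz : Measure Z) [IsProbabilityMeasure Pz]
    (g : EuclideanSpace ℝ (Fin d) → Z → ℝ)
    (G : EuclideanSpace ℝ (Fin d) → ℝ)
    (hG : ∀ w, G w = ∫ ζ, g w ζ ∂Pz)
    (μg ρ σ ηbar : ℝ) (hμg : 0 < μg) (hρ : 0 < ρ)
    (hηbar : 0 < ηbar) (hηbar' : ηbar ≤ min 1 (ρ / μg))
    -- differentiability and unbiasedness of the stochastic gradients
    (hdiff : ∀ ζ, Differentiable ℝ (fun w => g w ζ))
    (hunbiased : ∀ w, ∫ ζ, gradient (fun v => g v ζ) w ∂Pz = gradient G w)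
    -- `μ_g`-strong convexity of `G`
    (hsc : ∀ w v : EuclideanSpace ℝ (Fin d),
      G v ≥ G w + ⟪gradient G w, v - w⟫ + μg / 2 * ‖v - w‖ ^ 2)
    -- `w*` minimizes `G`
    (wstar : EuclideanSpace ℝ (Fin d)) (hmin : ∀ w, G wstar ≤ G w)
    -- relaxed weak growth condition
    (hrwgc : ∀ w, ∫ ζ, ‖gradient (fun v => g v ζ) w‖ ^ 2 ∂Pz ≤
      2 * ρ * (G w - G wstar) + σ ^ 2)
    -- i.i.d. samples `z_t ∼ P_z`
    (z : ℕ → Ω → Z) (hzmeas : ∀ t, Measurable (z t))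
    (hindep : iIndepFun z Pr)
    (hdist : ∀ t, Measure.map (z t) Pr = Pz)
    -- SGD iterates with step size `η̄/ρ`, started at the deterministic point `w₀`
    (w : ℕ → Ω → EuclideanSpace ℝ (Fin d)) (w0 : EuclideanSpace ℝ (Fin d))
    (hw0 : ∀ ω, w 0 ω = w0)
    (hstep : ∀ t ω, w (t + 1) ω =
      w t ω - (ηbar / ρ) • gradient (fun v => g v (z t ω)) (w t ω))
    -- integrability of the squared errors
    (hint : ∀ t, Integrable (fun ω => ‖w t ω - wstar‖ ^ 2) Pr) :
    ∀ t, (∫ ω, ‖w t ω - wstar‖ ^ 2 ∂Pr) ≤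
      (1 - ηbar * μg / ρ) ^ t * ‖w0 - wstar‖ ^ 2 + ηbar * σ ^ 2 / (ρ * μg) := by
  have hc : 0 ≤ ηbar / ρ := by positivity
  have hcρ : ηbar / ρ * ρ ≤ 1 := by
    rw [div_mul_cancel₀ _ hρ.ne']
    exact hηbar'.trans (min_le_left _ _)
  have hcμ : ηbar / ρ * μg ≤ 1 := by
    have := (le_div_iff₀ hμg).1 (hηbar'.trans (min_le_right _ _))
    rwa [div_mul_eq_mul_div, div_le_one hρ]
  intro t
  rcases subsingleton_or_nontrivial (EuclideanSpace ℝ (Fin d)) with hE | hE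
  · have hzero : ∀ ω, w t ω - wstar = 0 := fun ω => Subsingleton.elim _ _
    simp only [hzero, Subsingleton.elim w0 wstar, sub_self, norm_zero, ne_eq,
      OfNat.ofNat_ne_zero, not_false_eq_true, zero_pow, integral_zero, mul_zero, zero_add]
    positivity
  have hslice := aestronglyMeasurable_of_integral_strongly_convex hG
    (fun ζ => (hdiff ζ).continuous) hμg hsc
  have hdrift := integral_comp_succ_le_of_drift (fun μ _ => aemeasurable_uncurry_sgdStep hdiff
    hslice (ηbar / ρ) μ) hzmeas hindep hdist hw0 hstep (V := fun x => ‖x - wstar‖ ^ 2)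
    (by fun_prop) (integral_norm_sgdStep_sub_sq_le hunbiased hμg hsc hmin hrwgc hc hcρ hcμ) hint
  have hinit : ∫ ω, ‖w 0 ω - wstar‖ ^ 2 ∂Pr = ‖w0 - wstar‖ ^ 2 := by simp [hw0]
  have hnoise : (ηbar / ρ) ^ 2 * σ ^ 2 ≤ (1 - (1 - ηbar / ρ * μg)) * (ηbar * σ ^ 2 / (ρ * μg)) :=
    le_of_eq (by field_simp; ring)
  have := le_pow_mul_add_of_le_mul_add (e := fun t => ∫ ω, ‖w t ω - wstar‖ ^ 2 ∂Pr)
    (sub_nonneg.2 hcμ) (by positivity) hnoise hdrift t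
  rwa [hinit, div_mul_eq_mul_div] at this

/-- **Linear convergence of constant step-size SGD to a noise ball under the
relaxed weak growth condition (Theorem 2, Gower et al.).** -/
theorem stmt_8 {d : ℕ} {Ω Z : Type*} [MeasurableSpace Ω] [MeasurableSpace Z]
    (Pr : Measure Ω) [IsProbabilityMeasure Pr]
    (Pz : Measure Z) [IsProbabilityMeasure Pz]
    (g : EuclideanSpace ℝ (Fin d) → Z → ℝ)
    (G : EuclideanSpace ℝ (Fin d) → ℝ)
    (hG : ∀ w, G w = ∫ ζ, g w ζ ∂Pz)
    (μg ρ σ ηbar : ℝ) (hμg : 0 < μg) (hρ : 0 < ρ) (hσ : 0 ≤ σ)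
    (hηbar : 0 < ηbar) (hηbar' : ηbar ≤ min 1 (ρ / μg))
    -- differentiability and unbiasedness of the stochastic gradients
    (hdiff : ∀ ζ, Differentiable ℝ (fun w => g w ζ))
    (hunbiased : ∀ w, ∫ ζ, gradient (fun v => g v ζ) w ∂Pz = gradient G w)
    -- `μ_g`-strong convexity of `G`
    (hsc : ∀ w v : EuclideanSpace ℝ (Fin d),
      G v ≥ G w + ⟪gradient G w, v - w⟫ + μg / 2 * ‖v - w‖ ^ 2)
    -- `w*` minimizes `G`
    (wstar : EuclideanSpace ℝ (Fin d)) (hmin : ∀ w, G wstar ≤ G w)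
    -- relaxed weak growth condition
    (hrwgc : ∀ w, ∫ ζ, ‖gradient (fun v => g v ζ) w‖ ^ 2 ∂Pz ≤
      2 * ρ * (G w - G wstar) + σ ^ 2)
    -- i.i.d. samples `z_t ∼ P_z`
    (z : ℕ → Ω → Z) (hzmeas : ∀ t, Measurable (z t))
    (hindep : iIndepFun z Pr)
    (hdist : ∀ t, Measure.map (z t) Pr = Pz)
    -- SGD iterates with step size `η̄/ρ`, started at the deterministic point `w₀`
    (w : ℕ → Ω → EuclideanSpace ℝ (Fin d)) (w0 : EuclideanSpace ℝ (Fin d))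
    (hw0 : ∀ ω, w 0 ω = w0)
    (hstep : ∀ t ω, w (t + 1) ω =
      w t ω - (ηbar / ρ) • gradient (fun v => g v (z t ω)) (w t ω))
    -- integrability of the squared errors
    (hint : ∀ t, Integrable (fun ω => ‖w t ω - wstar‖ ^ 2) Pr) :
    ∀ t, (∫ ω, ‖w t ω - wstar‖ ^ 2 ∂Pr) ≤
      (1 - ηbar * μg / ρ) ^ t * ‖w0 - wstar‖ ^ 2 + ηbar * σ ^ 2 / (ρ * μg) :=
  stmt_8_general Pr Pz g G hG μg ρ σ ηbar hμg hρ hηbar hηbar' hdiff hunbiased hsc wstar hmin hrwgc z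
    hzmeas hindep hdist w w0 hw0 hstep hint
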